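/- Let n ≥ 2 and σ ∈ (0,2). Let Γ : ℝ^n → ℝ be bounded and Lebesgue measurable with Γ ≤ 0 everywhere, Γ = 0 outside the closed ball of radius 3 centered at the origin, and Γ < 0 on a set of positive Lebesgue measure. Let P := Γ * K_{2−σ}. If x₀ ∈ ℝ^n satisfies P(x₀) = inf_{ℝ^n} P, then |x₀| ≤ 3. -/
import Mathlib

open MeasureTheory
open scoped RealInnerProductSpace ENNReal

noncomputable section

/-- The constant `A(n,α) = π^{α - n/2} Γ((n-α)/2) / Γ(α/2)`. -/
def rieszA (n : ℕ) (α : ℝ) : ℝ :=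
  Real.pi ^ (α - (n : ℝ) / 2) * Real.Gamma (((n : ℝ) - α) / 2) / Real.Gamma (α / 2)

/-- The Riesz kernel of order `2 - σ`: `K_{2-σ}(y) = A(n,2-σ)·|y|^{-n+2-σ}`. -/
def rieszKernel (n : ℕ) (σ : ℝ) (y : EuclideanSpace ℝ (Fin n)) : ℝ :=
  rieszA n (2 - σ) * ‖y‖ ^ (-(n : ℝ) + 2 - σ)

/-- The Riesz potential `P = Γ * K_{2-σ}` (convolution over `ℝⁿ`). -/
def rieszPotential (n : ℕ) (σ : ℝ) (Γ : EuclideanSpace ℝ (Fin n) → ℝ)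
    (x : EuclideanSpace ℝ (Fin n)) : ℝ :=
  ∫ y : EuclideanSpace ℝ (Fin n), Γ y * rieszKernel n σ (x - y)

lemma rieszA_pos (n : ℕ) (hn : 2 ≤ n) {σ : ℝ} (hσ : σ ∈ Set.Ioo (0 : ℝ) 2) :
    0 < rieszA n (2 - σ) := by
  obtain ⟨h1, h2⟩ := hσ
  have hn' : (2 : ℝ) ≤ n := by exact_mod_cast hn
  apply div_pos (mul_pos (Real.rpow_pos_of_pos Real.pi_pos _) _)
  · exact Real.Gamma_pos_of_pos (by linarith)
  · exact Real.Gamma_pos_of_pos (by linarith)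

lemma measurable_rpow_norm (n : ℕ) (p : ℝ) :
    Measurable fun y : EuclideanSpace ℝ (Fin n) => ‖y‖ ^ p := by
  measurability

/-- Integrability of the Riesz kernel profile on balls. -/
lemma integrableOn_rpow_norm_closedBall (n : ℕ) {p : ℝ} (hp : -(n : ℝ) < p) (hp0 : p < 0)
    {R : ℝ} (hR : 0 < R) :
    IntegrableOn (fun y : EuclideanSpace ℝ (Fin n) => ‖y‖ ^ p)
      (Metric.closedBall 0 R) volume := by
  set μ := (volume : Measure (EuclideanSpace ℝ (Fin n))).restrict (Metric.closedBall 0 R) with hμ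
  have hnonneg : ∀ y : EuclideanSpace ℝ (Fin n), 0 ≤ ‖y‖ ^ p :=
    fun y => Real.rpow_nonneg (norm_nonneg y) p
  have hmeas := measurable_rpow_norm n p
  refine ⟨hmeas.aestronglyMeasurable, ?_⟩
  rw [hasFiniteIntegral_iff_ofReal (ae_of_all _ hnonneg)]
  rw [lintegral_eq_lintegral_meas_le μ (ae_of_all _ hnonneg) hmeas.aemeasurable]
  set T := R ^ p with hT
  have hTpos : 0 < T := Real.rpow_pos_of_pos hR p
  have hsplit : Set.Ioi (0 : ℝ) = Set.Ioc 0 T ∪ Set.Ioi T := (Set.Ioc_union_Ioi_eq_Ioi hTpos.le).symm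
  rw [hsplit]
  refine lt_of_le_of_lt (lintegral_union_le _ _ _) (ENNReal.add_lt_top.2 ⟨?_, ?_⟩)
  · -- small t: bound by total measure of the ball
    have hb : ∀ t ∈ Set.Ioc (0:ℝ) T, μ {a | t ≤ ‖a‖ ^ p} ≤ volume (Metric.closedBall (0 : EuclideanSpace ℝ (Fin n)) R) := by
      intro t _
      calc μ {a | t ≤ ‖a‖ ^ p} ≤ μ Set.univ := measure_mono (Set.subset_univ _)
        _ = volume (Metric.closedBall (0 : EuclideanSpace ℝ (Fin n)) R) := by
            rw [hμ, Measure.restrict_apply_univ]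
    calc ∫⁻ t in Set.Ioc 0 T, μ {a | t ≤ ‖a‖ ^ p}
        ≤ ∫⁻ _ in Set.Ioc 0 T, volume (Metric.closedBall (0 : EuclideanSpace ℝ (Fin n)) R) :=
          setLIntegral_mono' measurableSet_Ioc hb
      _ = volume (Metric.closedBall (0 : EuclideanSpace ℝ (Fin n)) R) * volume (Set.Ioc 0 T) := by
          rw [setLIntegral_const]
      _ < ⊤ := ENNReal.mul_lt_top measure_closedBall_lt_top (by simp [Real.volume_Ioc])
  · -- large t: bound by measure of shrinking balls
    have hb : ∀ t ∈ Set.Ioi T, μ {a | t ≤ ‖a‖ ^ p} ≤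
        ENNReal.ofReal (t ^ (p⁻¹ * n)) * volume (Metric.ball (0 : EuclideanSpace ℝ (Fin n)) 1) := by
      intro t ht
      have htpos : 0 < t := hTpos.trans ht
      have hsub : {a : EuclideanSpace ℝ (Fin n) | t ≤ ‖a‖ ^ p} ⊆
          Metric.closedBall 0 (t ^ p⁻¹) := by
        intro a ha
        simp only [Set.mem_setOf_eq] at ha
        rcases eq_or_lt_of_le (norm_nonneg a) with h0 | h0
        · exfalso
          rw [← h0, Real.zero_rpow hp0.ne] at ha
          linarith
        · rw [Metric.mem_closedBall, dist_zero_right]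
          have := Real.rpow_le_rpow_of_nonpos htpos ha (inv_nonpos.2 hp0.le)
          rwa [Real.rpow_rpow_inv (norm_nonneg a) hp0.ne] at this
      have h1 : μ {a | t ≤ ‖a‖ ^ p} ≤ volume (Metric.closedBall (0 : EuclideanSpace ℝ (Fin n)) (t ^ p⁻¹)) :=
        le_trans (Measure.restrict_apply_le _ _) (measure_mono hsub)
      have h2 : volume (Metric.closedBall (0 : EuclideanSpace ℝ (Fin n)) (t ^ p⁻¹)) =
          ENNReal.ofReal ((t ^ p⁻¹) ^ (Module.finrank ℝ (EuclideanSpace ℝ (Fin n)))) *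
            volume (Metric.ball (0 : EuclideanSpace ℝ (Fin n)) 1) :=
        Measure.addHaar_closedBall _ _ (Real.rpow_nonneg htpos.le _)
      rw [h2, finrank_euclideanSpace_fin] at h1
      refine h1.trans (le_of_eq ?_)
      congr 1
      rw [← Real.rpow_natCast (t ^ p⁻¹) n, ← Real.rpow_mul htpos.le]
    calc ∫⁻ t in Set.Ioi T, μ {a | t ≤ ‖a‖ ^ p}
        ≤ ∫⁻ t in Set.Ioi T, ENNReal.ofReal (t ^ (p⁻¹ * n)) *
            volume (Metric.ball (0 : EuclideanSpace ℝ (Fin n)) 1) :=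
          setLIntegral_mono' measurableSet_Ioi hb
      _ = (∫⁻ t in Set.Ioi T, ENNReal.ofReal (t ^ (p⁻¹ * n))) *
            volume (Metric.ball (0 : EuclideanSpace ℝ (Fin n)) 1) :=
          lintegral_mul_const' _ _ measure_ball_lt_top.ne
      _ < ⊤ := by
          refine ENNReal.mul_lt_top ?_ measure_ball_lt_top
          refine IntegrableOn.setLIntegral_lt_top ?_
          refine integrableOn_Ioi_rpow_of_lt ?_ hTpos
          rw [inv_mul_eq_div, div_lt_iff_of_neg hp0]
          linarith

/-- Integrability of the convolution integrand. -/
lemma integrable_integrand (n : ℕ) (hn : 2 ≤ n) {σ : ℝ} (hσ : σ ∈ Set.Ioo (0 : ℝ) 2)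
    (Γ : EuclideanSpace ℝ (Fin n) → ℝ) {C : ℝ} (hC : ∀ z, |Γ z| ≤ C) (hm : Measurable Γ)
    (hsupp : ∀ z : EuclideanSpace ℝ (Fin n), z ∉ Metric.closedBall 0 3 → Γ z = 0)
    (x : EuclideanSpace ℝ (Fin n)) :
    Integrable (fun y => Γ y * rieszKernel n σ (x - y)) volume := by
  obtain ⟨h1, h2⟩ := hσ
  have hn' : (2 : ℝ) ≤ n := by exact_mod_cast hn
  set p : ℝ := -(n : ℝ) + 2 - σ with hpdef
  have hp : -(n : ℝ) < p := by simp only [hpdef]; linarith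
  have hp0 : p < 0 := by simp only [hpdef]; linarith
  have hA := rieszA_pos n hn ⟨h1, h2⟩
  set A := rieszA n (2 - σ)
  have hmeasK : Measurable fun y : EuclideanSpace ℝ (Fin n) => rieszKernel n σ (x - y) := by
    have : Measurable fun y : EuclideanSpace ℝ (Fin n) => ‖x - y‖ ^ p :=
      (measurable_rpow_norm n p).comp (measurable_const.sub measurable_id)
    simpa [rieszKernel] using this.const_mul A
  -- the dominating function
  have hint : IntegrableOn (fun y : EuclideanSpace ℝ (Fin n) => ‖x - y‖ ^ p)
      (Metric.closedBall 0 3) volume := by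
    set R : ℝ := ‖x‖ + 3 with hRdef
    have hR : 0 < R := by positivity
    have base := integrableOn_rpow_norm_closedBall n hp hp0 hR
    have hpres : MeasurePreserving (fun y : EuclideanSpace ℝ (Fin n) => x - y) volume volume :=
      Measure.measurePreserving_sub_left volume x
    have hemb : MeasurableEmbedding (fun y : EuclideanSpace ℝ (Fin n) => x - y) :=
      (Homeomorph.subLeft x).measurableEmbedding
    have key : IntegrableOn ((fun z : EuclideanSpace ℝ (Fin n) => ‖z‖ ^ p) ∘ fun y => x - y)
        ((fun y : EuclideanSpace ℝ (Fin n) => x - y) ⁻¹' Metric.closedBall 0 R) volume :=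
      (hpres.integrableOn_comp_preimage hemb).2 base
    refine key.mono_set ?_
    intro y hy
    rw [Metric.mem_closedBall, dist_zero_right] at hy
    rw [Set.mem_preimage, Metric.mem_closedBall, dist_zero_right, hRdef]
    have h2 := norm_sub_le x y
    linarith
  have hC0 : 0 ≤ C := le_trans (abs_nonneg _) (hC 0)
  have hbound : Integrable
      ((Metric.closedBall (0 : EuclideanSpace ℝ (Fin n)) 3).indicator
        (fun y => C * (A * ‖x - y‖ ^ p))) volume := by
    rw [integrable_indicator_iff measurableSet_closedBall]
    exact (hint.const_mul A).const_mul C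
  refine hbound.mono' ?_ (ae_of_all _ ?_)
  · exact (hm.mul hmeasK).aestronglyMeasurable
  · intro y
    by_cases hy : y ∈ Metric.closedBall (0 : EuclideanSpace ℝ (Fin n)) 3
    · rw [Set.indicator_of_mem hy]
      have hKnn : 0 ≤ A * ‖x - y‖ ^ p := mul_nonneg hA.le (Real.rpow_nonneg (norm_nonneg _) _)
      rw [Real.norm_eq_abs, abs_mul]
      have : |rieszKernel n σ (x - y)| = A * ‖x - y‖ ^ p := by
        rw [rieszKernel]; exact abs_of_nonneg hKnn
      rw [this]
      exact mul_le_mul_of_nonneg_right (hC y) hKnn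
    · rw [Set.indicator_of_notMem hy, hsupp y hy]
      simp

/-- any global minimum point of the Riesz potential `P` lies in the closed
ball of radius 3. -/
theorem stmt2 (n : ℕ) (hn : 2 ≤ n) (σ : ℝ) (hσ : σ ∈ Set.Ioo (0 : ℝ) 2)
    (Γ : EuclideanSpace ℝ (Fin n) → ℝ)
    (hb : ∃ C : ℝ, ∀ z, |Γ z| ≤ C) (hm : Measurable Γ)
    (hneg : ∀ z, Γ z ≤ 0)
    (hsupp : ∀ z : EuclideanSpace ℝ (Fin n), z ∉ Metric.closedBall 0 3 → Γ z = 0)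
    (hpos : 0 < volume {z : EuclideanSpace ℝ (Fin n) | Γ z < 0})
    (P : EuclideanSpace ℝ (Fin n) → ℝ) (hP : P = rieszPotential n σ Γ)
    (x₀ : EuclideanSpace ℝ (Fin n)) (hmin : ∀ z, P x₀ ≤ P z) :
    ‖x₀‖ ≤ 3 := by
  by_contra hcon
  push_neg at hcon
  haveI : NeZero n := ⟨by omega⟩
  obtain ⟨C, hC⟩ := hb
  obtain ⟨h1, h2⟩ := hσ
  have hn' : (2 : ℝ) ≤ n := by exact_mod_cast hn
  set p : ℝ := -(n : ℝ) + 2 - σ with hpdef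
  have hp0 : p < 0 := by simp only [hpdef]; linarith
  have hA := rieszA_pos n hn ⟨h1, h2⟩
  set A := rieszA n (2 - σ) with hAdef
  set r : ℝ := ‖x₀‖ with hrdef
  have hr3 : (3 : ℝ) < r := hcon
  have hr0 : (0 : ℝ) < r := by linarith
  set x' : EuclideanSpace ℝ (Fin n) := (3 / r) • x₀ with hx'def
  have hx'norm : ‖x'‖ = 3 := by
    rw [hx'def, norm_smul, Real.norm_eq_abs, abs_of_pos (by positivity), ← hrdef,
      div_mul_cancel₀ _ hr0.ne']
  -- geometric key inequality
  have hkey : ∀ y : EuclideanSpace ℝ (Fin n), ‖y‖ ≤ 3 → ‖x' - y‖ < ‖x₀ - y‖ := by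
    intro y hy
    set c : ℝ := 3 / r with hcdef
    have hcr : c * r = 3 := div_mul_cancel₀ _ hr0.ne'
    have hc1 : c < 1 := (div_lt_one hr0).2 (by linarith)
    have hc0 : 0 < c := by positivity
    have hs : ⟪x₀, y⟫ ≤ 3 * r := by
      calc ⟪x₀, y⟫ ≤ ‖x₀‖ * ‖y‖ := real_inner_le_norm _ _
        _ ≤ r * 3 := by rw [← hrdef]; exact mul_le_mul_of_nonneg_left hy (norm_nonneg _)
        _ = 3 * r := by ring
    have ha2 : ‖x₀ - y‖ ^ 2 = r ^ 2 - 2 * ⟪x₀, y⟫ + ‖y‖ ^ 2 := by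
      rw [norm_sub_sq_real, hrdef]
    have hb2 : ‖x' - y‖ ^ 2 = 3 ^ 2 - 2 * (c * ⟪x₀, y⟫) + ‖y‖ ^ 2 := by
      rw [norm_sub_sq_real, hx'norm, hx'def, real_inner_smul_left, hcdef]
    have hbn : (0 : ℝ) ≤ ‖x' - y‖ := norm_nonneg _
    have hsq : ‖x' - y‖ ^ 2 < ‖x₀ - y‖ ^ 2 := by
      rw [ha2, hb2]
      nlinarith [mul_le_mul_of_nonneg_right hs (by linarith : (0:ℝ) ≤ 1 - c),
        mul_pos (sub_pos.2 hr3) (sub_pos.2 hr3)]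
    exact lt_of_pow_lt_pow_left₀ 2 (norm_nonneg _) hsq
  -- integrability
  have hf : Integrable (fun y => Γ y * rieszKernel n σ (x₀ - y)) volume :=
    integrable_integrand n hn ⟨h1, h2⟩ Γ hC hm hsupp x₀
  have hg : Integrable (fun y => Γ y * rieszKernel n σ (x' - y)) volume :=
    integrable_integrand n hn ⟨h1, h2⟩ Γ hC hm hsupp x'
  set h : EuclideanSpace ℝ (Fin n) → ℝ :=
    fun y => Γ y * rieszKernel n σ (x₀ - y) - Γ y * rieszKernel n σ (x' - y) with hhdef
  have hhint : Integrable h volume := hf.sub hg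
  -- pointwise comparison away from x'
  have hcomp : ∀ y : EuclideanSpace ℝ (Fin n), y ≠ x' → 0 ≤ h y ∧ (Γ y < 0 → 0 < h y) := by
    intro y hy
    by_cases hy3 : ‖y‖ ≤ 3
    · have hblt : ‖x' - y‖ < ‖x₀ - y‖ := hkey y hy3
      have hbpos : 0 < ‖x' - y‖ := by
        rw [norm_pos_iff, sub_ne_zero]
        exact fun e => hy e.symm
      have hrlt : ‖x₀ - y‖ ^ p < ‖x' - y‖ ^ p :=
        Real.rpow_lt_rpow_of_neg hbpos hblt hp0
      have hKlt : rieszKernel n σ (x₀ - y) < rieszKernel n σ (x' - y) := by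
        rw [rieszKernel, rieszKernel]
        exact mul_lt_mul_of_pos_left hrlt hA
      have hfac : h y = Γ y * (rieszKernel n σ (x₀ - y) - rieszKernel n σ (x' - y)) := by
        rw [hhdef]; ring
      constructor
      · rw [hfac]
        have h3 : rieszKernel n σ (x₀ - y) - rieszKernel n σ (x' - y) ≤ 0 := by linarith
        nlinarith [mul_nonneg (neg_nonneg.2 (hneg y)) (neg_nonneg.2 h3)]
      · intro hΓ
        rw [hfac]
        exact mul_pos_of_neg_of_neg hΓ (by linarith)
    · have : Γ y = 0 := hsupp y (by simpa [Metric.mem_closedBall, dist_zero_right] using hy3)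
      rw [hhdef]
      simp [this]
  have hsing : volume ({x'} : Set (EuclideanSpace ℝ (Fin n))) = 0 := measure_singleton x'
  have hae : 0 ≤ᵐ[volume] h := by
    filter_upwards [compl_mem_ae_iff.2 hsing] with y hy
    exact (hcomp y hy).1
  have hsupp_sub : {z : EuclideanSpace ℝ (Fin n) | Γ z < 0} \ {x'} ⊆ Function.support h := by
    intro y hy
    exact ((hcomp y (by simpa using hy.2)).2 hy.1).ne'
  have hμsupp : 0 < volume (Function.support h) := by
    calc (0 : ℝ≥0∞) < volume {z : EuclideanSpace ℝ (Fin n) | Γ z < 0} := hpos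
      _ = volume ({z : EuclideanSpace ℝ (Fin n) | Γ z < 0} \ {x'}) :=
        (measure_diff_null hsing).symm
      _ ≤ volume (Function.support h) := measure_mono hsupp_sub
  have hIpos : 0 < ∫ y, h y :=
    (integral_pos_iff_support_of_nonneg_ae hae hhint).2 hμsupp
  have hIeq : ∫ y, h y = P x₀ - P x' := by
    rw [hhdef, integral_sub hf hg, hP]
    rfl
  have := hmin x'
  rw [hIeq] at hIpos
  linarith
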